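/- Let v_1,...,v_n be intervals sorted by left endpoint (l_1 < l_2 < ... < l_n, all 2n endpoints distinct) with colors f(v_i) ∈ {+1, −1}. Define bcs(i, k, d) = maximum |S| over nonempty S ⊆ {v_1,...,v_i} such that the interval graph induced by S is connected, max_{v ∈ S} r_v = k, and Σ_{v ∈ S} f(v) = d (−∞ if none exists). Then for i ≥ 1 and k > r_i: bcs(i, k, d) = max{bcs(i−1, k, d − f(v_i)) + 1, bcs(i−1, k, d)}. -/

import Mathlib

/-!
Let `S` be feasible for `bcs(i+1, k, d)` with `v_i ∈ S`. Some `v ∈ S` has `r_v = k > r_i`, and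
`v ≠ v_i` comes earlier, so `l_v < l_i`: the interval of `v_i` is nested in that of `v`. Hence every
neighbour of `v_i` in `S` is `v` or a neighbour of `v`, and `S \ {v_i}` is still connected and
feasible for `bcs(i, k, d - f(v_i))`. Conversely, in a set feasible for `bcs(i, k, d - f(v_i))`
the interval with right endpoint `k` contains that of `v_i`, so adding `v_i` keeps the set
connected. Sets avoiding `v_i` are feasible for `bcs(i, k, d)` directly.
-/

/-- The interval graph of the integer intervals `[l v, r v]`, `v : Fin n`:
two distinct vertices are adjacent iff their intervals intersect. -/
def intervalGraphZ {n : ℕ} (l r : Fin n → ℤ) : SimpleGraph (Fin n) where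
  Adj u v := u ≠ v ∧ max (l u) (l v) ≤ min (r u) (r v)
  symm := by
    constructor
    intro u v ⟨h₁, h₂⟩
    exact ⟨h₁.symm, by rw [max_comm, min_comm]; exact h₂⟩
  loopless := by constructor; intro u h; exact h.1 rfl

/-- `bcsI l r f i k d`: the maximum cardinality of a nonempty set `S` of interval
indices `< i` that is connected in the interval graph, has `max_{v ∈ S} r v = k`,
and has `∑_{v ∈ S} f v = d`; it is `⊥` (= -∞) if no such set exists. -/
noncomputable def bcsI {n : ℕ} (l r f : Fin n → ℤ) (i : ℕ) (k d : ℤ) : WithBot ℕ∞ :=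
  sSup {m | ∃ S : Finset (Fin n), S.Nonempty ∧ (∀ v ∈ S, (v : ℕ) < i) ∧
    ((intervalGraphZ l r).induce (↑S : Set (Fin n))).Connected ∧
    (∃ v ∈ S, r v = k) ∧ (∀ v ∈ S, r v ≤ k) ∧ (∑ v ∈ S, f v) = d ∧
    m = ((S.card : ℕ∞) : WithBot ℕ∞)}

namespace SimpleGraph

variable {V : Type*} {G : SimpleGraph V}

lemma Connected.induce_insert {S : Set V} (hS : (G.induce S).Connected) {a v : V} (hv : v ∈ S)
    (hav : G.Adj a v) : (G.induce (insert a S)).Connected := by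
  have h := induce_union_connected (induce_pair_connected_of_adj hav).preconnected
    hS.preconnected ⟨v, by simp, hv⟩
  rwa [Set.insert_union, Set.singleton_union, Set.insert_eq_of_mem hv] at h

lemma Preconnected.of_surjective_of_adj_reachable {W : Type*} {H : SimpleGraph W}
    (hG : G.Preconnected) (f : V → W) (hf : Function.Surjective f)
    (hadj : ∀ x y, G.Adj x y → H.Reachable (f x) (f y)) : H.Preconnected := by
  intro a b
  obtain ⟨x, rfl⟩ := hf a
  obtain ⟨y, rfl⟩ := hf b
  simp only [reachable_iff_reflTransGen] at hadj ⊢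
  exact ((reachable_iff_reflTransGen x y).1 (hG x y)).lift' f hadj

/-- Retract `w` onto `v`: the neighbours of `w` are neighbours of `v`, so edges map to edges
or collapse. -/
lemma Connected.induce_diff_singleton {S : Set V} (hS : (G.induce S).Connected) {v w : V}
    (hv : v ∈ S) (hvw : v ≠ w) (hdom : ∀ u ∈ S, G.Adj u w → u = v ∨ G.Adj u v) :
    (G.induce (S \ {w})).Connected := by
  classical
  let ρ : S → ↑(S \ {w}) := fun x => if h : (x : V) = w then ⟨v, hv, hvw⟩ else ⟨x, x.2, h⟩
  have hρ : ∀ x : S, (ρ x : V) = if (x : V) = w then v else x := fun x => by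
    by_cases h : (x : V) = w <;> simp [ρ, h]
  have hstep : ∀ x y : S, G.Adj x y → (ρ x : V) = ρ y ∨ G.Adj (ρ x) (ρ y) := by
    rintro ⟨x, hx⟩ ⟨y, hy⟩ hxy
    simp only [hρ]
    split_ifs with hxw hyw hyw
    · exact (G.ne_of_adj hxy (hxw.trans hyw.symm)).elim
    · exact ((hdom y hy (hxw ▸ hxy.symm)).imp Eq.symm Adj.symm)
    · exact hdom x hx (hyw ▸ hxy)
    · exact Or.inr hxy
  refine (connected_iff _).2 ⟨hS.preconnected.of_surjective_of_adj_reachable ρ ?_ ?_,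
    ⟨⟨v, hv, hvw⟩⟩⟩
  · rintro ⟨x, hxS, hxw⟩
    exact ⟨⟨x, hxS⟩, by simp [ρ, show x ≠ w from hxw]⟩
  · intro x y hxy
    rcases hstep x y hxy with h | h
    · rw [Subtype.ext h]
    · exact Adj.reachable h

end SimpleGraph

lemma Fin.val_lt_of_val_lt_succ_of_ne {n : ℕ} {v w : Fin n} (h : (v : ℕ) < w + 1) (hne : v ≠ w) :
    (v : ℕ) < w :=
  (Nat.lt_succ_iff.1 h).lt_of_ne (Fin.val_ne_of_ne hne)

section Intervals

variable {n : ℕ} {l r : Fin n → ℤ}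

lemma intervalGraphZ_adj_of_le_of_le {u v : Fin n} (huv : u ≠ v) (hu : l u ≤ r u)
    (hl : l v ≤ l u) (hr : r u ≤ r v) : (intervalGraphZ l r).Adj u v := by
  refine ⟨huv, ?_⟩
  simp only [max_le_iff, le_min_iff]
  omega

lemma intervalGraphZ_adj_of_adj_of_le_of_le {u v w : Fin n} (huv : u ≠ v)
    (huw : (intervalGraphZ l r).Adj u w) (hl : l v ≤ l w) (hr : r w ≤ r v) :
    (intervalGraphZ l r).Adj u v := by
  obtain ⟨-, h⟩ := huw
  refine ⟨huv, ?_⟩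
  simp only [max_le_iff, le_min_iff] at h ⊢
  omega

end Intervals

open Finset

section Feasible

variable {n : ℕ} {l r f : Fin n → ℤ} {i : ℕ} {k d : ℤ} {S : Finset (Fin n)}

structure IsBcsFeasible (l r f : Fin n → ℤ) (i : ℕ) (k d : ℤ) (S : Finset (Fin n)) : Prop where
  nonempty : S.Nonempty
  val_lt : ∀ v ∈ S, (v : ℕ) < i
  connected : ((intervalGraphZ l r).induce (S : Set (Fin n))).Connected
  exists_r_eq : ∃ v ∈ S, r v = k
  r_le : ∀ v ∈ S, r v ≤ k
  sum_eq : ∑ v ∈ S, f v = d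

lemma bcsI_eq_sSup_image : bcsI l r f i k d =
    sSup ((fun S : Finset (Fin n) => ((#S : ℕ∞) : WithBot ℕ∞)) ''
      {S | IsBcsFeasible l r f i k d S}) := by
  unfold bcsI
  congr 1
  ext m
  constructor
  · rintro ⟨S, h₁, h₂, h₃, h₄, h₅, h₆, rfl⟩
    exact ⟨S, ⟨h₁, h₂, h₃, h₄, h₅, h₆⟩, rfl⟩
  · rintro ⟨S, ⟨h₁, h₂, h₃, h₄, h₅, h₆⟩, rfl⟩
    exact ⟨S, h₁, h₂, h₃, h₄, h₅, h₆, rfl⟩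

lemma IsBcsFeasible.card_le_bcsI (hS : IsBcsFeasible l r f i k d S) :
    ((#S : ℕ∞) : WithBot ℕ∞) ≤ bcsI l r f i k d := by
  rw [bcsI_eq_sSup_image]
  exact le_sSup (Set.mem_image_of_mem _ hS)

lemma bcsI_le {m : WithBot ℕ∞}
    (h : ∀ S, IsBcsFeasible l r f i k d S → ((#S : ℕ∞) : WithBot ℕ∞) ≤ m) :
    bcsI l r f i k d ≤ m := by
  rw [bcsI_eq_sSup_image]
  exact sSup_le (Set.forall_mem_image.2 h)

lemma bcsI_eq_bot_or_exists :
    bcsI l r f i k d = ⊥ ∨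
      ∃ S, IsBcsFeasible l r f i k d S ∧ bcsI l r f i k d = ((#S : ℕ∞) : WithBot ℕ∞) := by
  rw [bcsI_eq_sSup_image]
  rcases Set.eq_empty_or_nonempty {S | IsBcsFeasible l r f i k d S} with h | h
  · simp [h]
  · obtain ⟨S, hS, hmax⟩ :=
      (h.image fun S : Finset (Fin n) => ((#S : ℕ∞) : WithBot ℕ∞)).csSup_mem (Set.toFinite _)
    exact Or.inr ⟨S, hS, hmax.symm⟩

lemma IsBcsFeasible.mono_index {j : ℕ} (hS : IsBcsFeasible l r f i k d S) (hij : i ≤ j) :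
    IsBcsFeasible l r f j k d S :=
  { hS with val_lt := fun v hv => (hS.val_lt v hv).trans_le hij }

lemma bcsI_mono_index {j : ℕ} (hij : i ≤ j) : bcsI l r f i k d ≤ bcsI l r f j k d :=
  bcsI_le fun _ hS => (hS.mono_index hij).card_le_bcsI

variable {i' : Fin n}

lemma IsBcsFeasible.of_notMem (hS : IsBcsFeasible l r f (i' + 1) k d S) (hi : i' ∉ S) :
    IsBcsFeasible l r f i' k d S :=
  { hS with
    val_lt := fun v hv => Fin.val_lt_of_val_lt_succ_of_ne (hS.val_lt v hv) fun h => hi (h ▸ hv) }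

lemma IsBcsFeasible.erase (hl : StrictMono l) (hk : r i' < k)
    (hS : IsBcsFeasible l r f (i' + 1) k d S) (hi : i' ∈ S) :
    IsBcsFeasible l r f i' k (d - f i') (S.erase i') := by
  obtain ⟨v, hvS, hvk⟩ := hS.exists_r_eq
  have hvi : v ≠ i' := by rintro rfl; omega
  have hvS' : v ∈ S.erase i' := mem_erase.2 ⟨hvi, hvS⟩
  have hlv : l v < l i' := hl (Fin.val_lt_of_val_lt_succ_of_ne (hS.val_lt v hvS) hvi)
  refine ⟨⟨v, hvS'⟩, fun u hu => ?_, ?_, ⟨v, hvS', hvk⟩,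
    fun u hu => hS.r_le u (mem_of_mem_erase hu), ?_⟩
  · exact Fin.val_lt_of_val_lt_succ_of_ne (hS.val_lt u (mem_of_mem_erase hu)) (ne_of_mem_erase hu)
  · rw [coe_erase]
    refine hS.connected.induce_diff_singleton (mem_coe.2 hvS) hvi fun u _ hu => ?_
    by_cases huv : u = v
    · exact Or.inl huv
    · exact Or.inr (intervalGraphZ_adj_of_adj_of_le_of_le huv hu hlv.le (hvk ▸ hk.le))
  · rw [← hS.sum_eq, ← sum_erase_add S f hi, add_sub_cancel_right]

lemma IsBcsFeasible.insert (hl : StrictMono l) (hi : l i' ≤ r i') (hk : r i' < k)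
    (hS : IsBcsFeasible l r f i' k (d - f i') S) :
    IsBcsFeasible l r f (i' + 1) k d (insert i' S) := by
  obtain ⟨v, hvS, hvk⟩ := hS.exists_r_eq
  have hvi : v < i' := Fin.lt_def.2 (hS.val_lt v hvS)
  have hiS : i' ∉ S := fun h => (hS.val_lt i' h).false
  refine ⟨insert_nonempty _ _, fun u hu => ?_, ?_, ⟨v, mem_insert_of_mem hvS, hvk⟩,
    fun u hu => ?_, ?_⟩
  · rcases mem_insert.1 hu with rfl | hu
    · exact Nat.lt_succ_self _
    · exact Nat.lt_succ_of_lt (hS.val_lt u hu)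
  · rw [coe_insert]
    exact hS.connected.induce_insert (mem_coe.2 hvS)
      (intervalGraphZ_adj_of_le_of_le hvi.ne' hi (hl hvi).le (hvk ▸ hk.le))
  · rcases mem_insert.1 hu with rfl | hu
    · exact hk.le
    · exact hS.r_le u hu
  · rw [sum_insert hiS, hS.sum_eq, add_sub_cancel]

end Feasible

theorem stmt_16_general {n : ℕ} (l r f : Fin n → ℤ)
    (hsort : ∀ u v : Fin n, u < v → l u < l v)
    (hlr : ∀ v, l v < r v)
    (i : Fin n) (k d : ℤ) (hk : r i < k) :
    bcsI l r f ((i : ℕ) + 1) k d =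
      (bcsI l r f (i : ℕ) k (d - f i) + 1) ⊔ bcsI l r f (i : ℕ) k d := by
  have hl : StrictMono l := fun u v => hsort u v
  apply le_antisymm
  · refine bcsI_le fun S hS => ?_
    by_cases hiS : i ∈ S
    · calc ((#S : ℕ∞) : WithBot ℕ∞) = ((#(S.erase i) : ℕ∞) : WithBot ℕ∞) + 1 := by
            rw [← card_erase_add_one hiS]; push_cast; rfl
        _ ≤ bcsI l r f i k (d - f i) + 1 := by
            gcongr; exact (hS.erase hl hk hiS).card_le_bcsI
        _ ≤ _ := le_sup_left
    · exact (hS.of_notMem hiS).card_le_bcsI.trans le_sup_right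
  · refine sup_le ?_ (bcsI_mono_index (Nat.le_succ _))
    rcases bcsI_eq_bot_or_exists (l := l) (r := r) (f := f) (i := i) (k := k) (d := d - f i)
      with h | ⟨S, hS, h⟩
    · simp [h]
    · rw [h]
      calc ((#S : ℕ∞) : WithBot ℕ∞) + 1 = ((#(insert i S) : ℕ∞) : WithBot ℕ∞) := by
            rw [card_insert_of_notMem fun h => (hS.val_lt i h).false]; push_cast; rfl
        _ ≤ _ := (hS.insert hl (hlr i).le hk).card_le_bcsI

/-- the interval DP recurrence in the case `k > r i`: intervals are
sorted by left endpoint, all `2n` endpoints are distinct, colors `f ∈ {+1, -1}`;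
then `bcs(i+1, k, d) = max (bcs(i, k, d - f i) + 1) (bcs(i, k, d))`
(here `bcs(i+1, ·, ·)` ranges over subsets of `{v_0, …, v_i}`). -/
theorem stmt_16 {n : ℕ} (l r f : Fin n → ℤ)
    (hsort : ∀ u v : Fin n, u < v → l u < l v)
    (hlr : ∀ v, l v < r v)
    (hdist : Function.Injective (Sum.elim l r : Fin n ⊕ Fin n → ℤ))
    (hf : ∀ v, f v = 1 ∨ f v = -1)
    (i : Fin n) (k d : ℤ) (hk : r i < k) :
    bcsI l r f ((i : ℕ) + 1) k d =
      (bcsI l r f (i : ℕ) k (d - f i) + 1) ⊔ bcsI l r f (i : ℕ) k d :=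
  stmt_16_general l r f hsort hlr i k d hk
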